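/- (Failure of dominance, variance comparison) Fix p ∈ (0,1), κ ∈ (0,1], σ₀² > 0, σ₁² ≥ 0. Define V_P := (p·σ₁² + (1−p)·σ₀²·κ) / (p + (1−p)·κ)² and V_GAI := p·σ₁² + (1−p)·σ₀². Then V_P < V_GAI if and only if p·σ₁² + (1−p)·σ₀²·κ < (p·σ₁² + (1−p)·σ₀²)·(p + (1−p)·κ)². In particular, there exist parameter values with V_P < V_GAI: as σ₁ → 0 and κ → 0 (with p, σ₀ fixed), V_P → 0 while V_GAI → (1−p)σ₀² > 0. -/
import Mathlib


/-- **Failure of dominance under non-random labeling (variance comparison).**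
With `V_P = (p σ₁² + (1−p) σ₀² κ)/(p + (1−p)κ)²` and `V_GAI = p σ₁² + (1−p) σ₀²`:
(i) for all admissible parameters, `V_P < V_GAI` iff
`p σ₁² + (1−p) σ₀² κ < (p σ₁² + (1−p) σ₀²)(p + (1−p)κ)²`; and
(ii) there exist parameter values (e.g. `σ₁ = 0` and `κ` small) with
`V_P < V_GAI`, i.e. the primary-only estimator strictly beats GAI. -/
theorem failure_of_dominance_variance_comparison :
    (∀ p κ σ₀ σ₁ : ℝ, 0 < p → p < 1 → 0 < κ → κ ≤ 1 →
      ((p * σ₁ ^ 2 + (1 - p) * σ₀ ^ 2 * κ) / (p + (1 - p) * κ) ^ 2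
          < p * σ₁ ^ 2 + (1 - p) * σ₀ ^ 2
        ↔ p * σ₁ ^ 2 + (1 - p) * σ₀ ^ 2 * κ
          < (p * σ₁ ^ 2 + (1 - p) * σ₀ ^ 2) * (p + (1 - p) * κ) ^ 2)) ∧
    (∀ p σ₀ : ℝ, 0 < p → p < 1 → 0 < σ₀ ^ 2 →
      ∃ κ σ₁ : ℝ, 0 < κ ∧ κ ≤ 1 ∧
        (p * σ₁ ^ 2 + (1 - p) * σ₀ ^ 2 * κ) / (p + (1 - p) * κ) ^ 2
          < p * σ₁ ^ 2 + (1 - p) * σ₀ ^ 2) := by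
  constructor
  · intro p κ σ₀ σ₁ hp hp1 hκ hκ1
    have h1p : 0 < 1 - p := by linarith
    have hd : 0 < (p + (1 - p) * κ) ^ 2 := by
      have : 0 < p + (1 - p) * κ := by nlinarith
      positivity
    exact div_lt_iff₀ hd
  · intro p σ₀ hp hp1 hσ
    have h1p : 0 < 1 - p := by linarith
    refine ⟨p ^ 2 / 2, 0, by positivity, by nlinarith, ?_⟩
    have hd : 0 < (p + (1 - p) * (p ^ 2 / 2)) ^ 2 := by
      have : 0 < p + (1 - p) * (p ^ 2 / 2) := by positivity
      positivity
    rw [div_lt_iff₀ hd]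
    have hA : 0 < (1 - p) * σ₀ ^ 2 := mul_pos h1p hσ
    nlinarith [sq_nonneg ((1 - p) * (p ^ 2 / 2)), mul_pos hp (mul_pos h1p (mul_pos hA (mul_pos hp hp))), mul_pos hA (mul_pos hp hp)]
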